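/- arXiv:1706.01351 — 3 statements merged into one kernel-verified Lean document; each statement's English description precedes it below -/
import Mathlib

section
/- There exists a constant C > 0 such that for all t, λ, τ > 0, |∫₀ᵗ (iτ + s)^{-3/2} e^{-λ/(iτ+s)} ds| ≤ C/√λ, where i is the imaginary unit and the power (iτ+s)^{-3/2} uses the principal branch. -/
/-!
Along the line `Re z = s` the integrand has modulus `‖z‖ ^ (-p) * exp (-λ s / ‖z‖ ^ 2)`.
Dropping the exponential bounds it by `s ^ (-p)`; trading the exponential for the power
`(λ s / ‖z‖ ^ 2) ^ (-p / 2)` instead makes `‖z‖` cancel, leaving `(λ s) ^ (-p / 2)`.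
Neither bound involves `τ`. Integrating the second over `(0, λ)` and the first over `(λ, ∞)`
gives `(1 / (1 - p / 2) + 1 / (p - 1)) λ ^ (1 - p)` for `1 < p < 2`, which is `6 / √λ`
at `p = 3 / 2`.
-/

open MeasureTheory Real Complex Set

lemma Real.exp_neg_le_rpow_neg {a x : ℝ} (ha₀ : 0 ≤ a) (ha₁ : a ≤ 1) (hx : 0 < x) :
    Real.exp (-x) ≤ x ^ (-a) := by
  rw [Real.rpow_def_of_pos hx, Real.exp_le_exp]
  have := Real.log_le_sub_one_of_pos hx
  rcases le_total 0 (Real.log x) with h | h <;> nlinarith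

namespace Complex

lemma norm_cpow_ofReal_mul_exp_neg_div (z : ℂ) (p l : ℝ) :
    ‖z ^ (p : ℂ) * exp (-l / z)‖ = ‖z‖ ^ p * Real.exp (-(l * z.re / ‖z‖ ^ 2)) := by
  rw [norm_mul, norm_cpow_real, norm_exp, neg_div, div_eq_mul_inv, neg_re, re_ofReal_mul,
    inv_re, normSq_eq_norm_sq, mul_div_assoc]

variable {z : ℂ} {p l : ℝ}

lemma norm_cpow_neg_mul_exp_neg_div_le_re_rpow (hz : 0 < z.re) (hp : 0 ≤ p) (hl : 0 ≤ l) :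
    ‖z ^ (-p : ℂ) * exp (-l / z)‖ ≤ z.re ^ (-p) := by
  rw [← ofReal_neg, norm_cpow_ofReal_mul_exp_neg_div]
  calc ‖z‖ ^ (-p) * Real.exp (-(l * z.re / ‖z‖ ^ 2))
      ≤ ‖z‖ ^ (-p) :=
        mul_le_of_le_one_right (by positivity)
          (Real.exp_le_one_iff.2 (neg_nonpos.2 (by positivity)))
    _ ≤ z.re ^ (-p) := Real.rpow_le_rpow_of_nonpos hz (re_le_norm z) (neg_nonpos.2 hp)

lemma norm_cpow_neg_mul_exp_neg_div_le_mul_re_rpow (hz : 0 < z.re) (hp₀ : 0 ≤ p)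
    (hp₂ : p ≤ 2) (hl : 0 < l) :
    ‖z ^ (-p : ℂ) * exp (-l / z)‖ ≤ (l * z.re) ^ (-(p / 2)) := by
  have hz₀ : 0 < ‖z‖ := hz.trans_le (re_le_norm z)
  rw [← ofReal_neg, norm_cpow_ofReal_mul_exp_neg_div]
  calc ‖z‖ ^ (-p) * Real.exp (-(l * z.re / ‖z‖ ^ 2))
      ≤ ‖z‖ ^ (-p) * (l * z.re / ‖z‖ ^ 2) ^ (-(p / 2)) := by
        gcongr; exact Real.exp_neg_le_rpow_neg (by positivity) (by linarith) (by positivity)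
    _ = (l * z.re) ^ (-(p / 2)) := by
        rw [Real.div_rpow (by positivity) (by positivity), ← Real.rpow_natCast,
          ← Real.rpow_mul hz₀.le, mul_div_left_comm, Nat.cast_ofNat, mul_neg,
          mul_div_cancel₀ p two_ne_zero, div_self (by positivity), mul_one]

end Complex

section
variable {r l : ℝ}

lemma integrableOn_Ioc_mul_rpow (hr : -1 < r) (hl : 0 ≤ l) (c : ℝ) :
    IntegrableOn (fun s : ℝ => (l * s) ^ r) (Ioc 0 c) := by
  have h : IntegrableOn (fun s : ℝ => s ^ r) (Ioc 0 c) :=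
    (intervalIntegral.intervalIntegrable_rpow' hr).1
  exact IntegrableOn.congr_fun (h.const_mul (l ^ r))
    (fun s hs => (Real.mul_rpow hl hs.1.le).symm) measurableSet_Ioc

lemma integral_Ioc_mul_rpow {c : ℝ} (hr : -1 < r) (hl : 0 ≤ l) (hc : 0 ≤ c) :
    ∫ s in Ioc 0 c, (l * s) ^ r = l ^ r * (c ^ (r + 1) / (r + 1)) := by
  rw [setIntegral_congr_fun measurableSet_Ioc (fun s hs => Real.mul_rpow hl hs.1.le),
    integral_const_mul, ← intervalIntegral.integral_of_le hc, integral_rpow (Or.inl hr),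
    Real.zero_rpow (by linarith), sub_zero]

end

section
variable {p l : ℝ}

lemma integrableOn_Ioi_min_rpow (hp₁ : 1 < p) (hp₂ : p < 2) (hl : 0 < l) :
    IntegrableOn (fun s : ℝ => min ((l * s) ^ (-(p / 2))) (s ^ (-p))) (Ioi 0) := by
  have hmeas : AEStronglyMeasurable (fun s : ℝ => min ((l * s) ^ (-(p / 2))) (s ^ (-p))) :=
    by fun_prop
  have hnorm : ∀ s : ℝ, 0 < s → ‖min ((l * s) ^ (-(p / 2))) (s ^ (-p))‖ =
      min ((l * s) ^ (-(p / 2))) (s ^ (-p)) :=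
    fun s hs => Real.norm_of_nonneg (le_min (by positivity) (by positivity))
  rw [← Ioc_union_Ioi_eq_Ioi hl.le]
  refine IntegrableOn.union ?_ ?_
  · refine (integrableOn_Ioc_mul_rpow (r := -(p / 2)) (by linarith) hl.le l).mono'
      hmeas.restrict ?_
    filter_upwards [ae_restrict_mem measurableSet_Ioc] with s hs
    rw [hnorm s hs.1]; exact min_le_left _ _
  · refine (integrableOn_Ioi_rpow_of_lt (a := -p) (by linarith) hl).mono' hmeas.restrict ?_
    filter_upwards [ae_restrict_mem measurableSet_Ioi] with s hs
    rw [hnorm s (hl.trans hs)]; exact min_le_right _ _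

lemma setIntegral_Ioi_min_rpow_le (hp₁ : 1 < p) (hp₂ : p < 2) (hl : 0 < l) :
    ∫ s in Ioi 0, min ((l * s) ^ (-(p / 2))) (s ^ (-p)) ≤
      (1 / (1 - p / 2) + 1 / (p - 1)) * l ^ (1 - p) := by
  have hint := integrableOn_Ioi_min_rpow hp₁ hp₂ hl
  rw [← Ioc_union_Ioi_eq_Ioi hl.le] at hint ⊢
  rw [setIntegral_union (Ioc_disjoint_Ioi le_rfl) measurableSet_Ioi
    (hint.mono_set subset_union_left) (hint.mono_set subset_union_right)]
  have head :
      ∫ s in Ioc 0 l, min ((l * s) ^ (-(p / 2))) (s ^ (-p)) ≤ l ^ (1 - p) / (1 - p / 2) :=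
    calc _ ≤ ∫ s in Ioc 0 l, (l * s) ^ (-(p / 2)) :=
          setIntegral_mono_on (hint.mono_set subset_union_left)
            (integrableOn_Ioc_mul_rpow (by linarith) hl.le l) measurableSet_Ioc
            fun s _ => min_le_left _ _
      _ = l ^ (1 - p) / (1 - p / 2) := by
          rw [integral_Ioc_mul_rpow (by linarith) hl.le hl.le, mul_div_assoc', ← Real.rpow_add hl]
          ring_nf
  have tail : ∫ s in Ioi l, min ((l * s) ^ (-(p / 2))) (s ^ (-p)) ≤ l ^ (1 - p) / (p - 1) :=
    calc _ ≤ ∫ s in Ioi l, s ^ (-p) :=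
          setIntegral_mono_on (hint.mono_set subset_union_right)
            (integrableOn_Ioi_rpow_of_lt (a := -p) (by linarith) hl) measurableSet_Ioi
            fun s _ => min_le_right _ _
      _ = l ^ (1 - p) / (p - 1) := by
          rw [integral_Ioi_rpow_of_lt (by linarith) hl, neg_div, ← div_neg]
          ring_nf
  calc _ ≤ l ^ (1 - p) / (1 - p / 2) + l ^ (1 - p) / (p - 1) := add_le_add head tail
    _ = _ := by ring

end

theorem norm_integral_cpow_neg_mul_exp_neg_div_le {p l t : ℝ} (hp₁ : 1 < p) (hp₂ : p < 2)
    (hl : 0 < l) (ht : 0 ≤ t) (τ : ℝ) :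
    ‖∫ s in (0 : ℝ)..t, (I * τ + s) ^ (-p : ℂ) * exp (-l / (I * τ + s))‖ ≤
      (1 / (1 - p / 2) + 1 / (p - 1)) * l ^ (1 - p) := by
  have hint := integrableOn_Ioi_min_rpow hp₁ hp₂ hl
  have hre : ∀ s : ℝ, (I * τ + s).re = s := fun s => by simp
  calc _ ≤ ∫ s in (0 : ℝ)..t, min ((l * s) ^ (-(p / 2))) (s ^ (-p)) := by
        refine intervalIntegral.norm_integral_le_of_norm_le ht (ae_of_all _ fun s hs => ?_)
          ((intervalIntegrable_iff_integrableOn_Ioc_of_le ht).2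
            (hint.mono_set Ioc_subset_Ioi_self))
        have hs : 0 < (I * τ + s).re := (hre s).symm ▸ hs.1
        refine le_min ?_ ?_
        · simpa only [hre] using
            norm_cpow_neg_mul_exp_neg_div_le_mul_re_rpow hs (by linarith) hp₂.le hl
        · simpa only [hre] using
            norm_cpow_neg_mul_exp_neg_div_le_re_rpow hs (by linarith) hl.le
    _ = ∫ s in Ioc 0 t, min ((l * s) ^ (-(p / 2))) (s ^ (-p)) :=
        intervalIntegral.integral_of_le ht
    _ ≤ ∫ s in Ioi 0, min ((l * s) ^ (-(p / 2))) (s ^ (-p)) := by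
        refine setIntegral_mono_set hint ?_ Ioc_subset_Ioi_self.eventuallyLE
        filter_upwards [ae_restrict_mem measurableSet_Ioi] with s (hs : 0 < s)
        positivity
    _ ≤ _ := setIntegral_Ioi_min_rpow_le hp₁ hp₂ hl

/-- There is a constant `C > 0` such that for all `t, λ, τ > 0`,
`|∫₀ᵗ (iτ+s)^{-3/2} e^{-λ/(iτ+s)} ds| ≤ C/√λ` (principal branch powers). -/
theorem stmt1 :
    ∃ C : ℝ, 0 < C ∧ ∀ t l τ : ℝ, 0 < t → 0 < l → 0 < τ →
      ‖∫ s in (0:ℝ)..t,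
          (Complex.I * (τ:ℂ) + (s:ℂ)) ^ (-(3:ℂ)/2) *
            Complex.exp (-(l:ℂ) / (Complex.I * (τ:ℂ) + (s:ℂ)))‖ ≤ C / Real.sqrt l := by
  refine ⟨6, by norm_num, fun t l τ ht hl _ => ?_⟩
  have h := norm_integral_cpow_neg_mul_exp_neg_div_le (p := 3 / 2) (by norm_num) (by norm_num)
    hl ht.le τ
  have hexp : -(3 : ℂ) / 2 = -((3 / 2 : ℝ) : ℂ) := by push_cast; ring
  have hC : (1 / (1 - 3 / 2 / 2) + 1 / (3 / 2 - 1) : ℝ) * l ^ (1 - 3 / 2 : ℝ) = 6 / √l := by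
    rw [Real.sqrt_eq_rpow, show (1 - 3 / 2 : ℝ) = -(1 / 2) by norm_num, Real.rpow_neg hl.le]
    ring
  rwa [hexp, ← hC]
end

section
/- In dimension d ≤ 2, the integral ∫_{ℝ^d × ℝ^d} |ξ₁||ξ₂| / ((1+|ξ₁-ξ₂|²)(1+|ξ₁|²)(1+|ξ₂|²)²) dξ₁ dξ₂ is finite. -/
/-!
With `a = 1 + |ξ₁|²`, `b = 1 + |ξ₂|²`, `c = 1 + |ξ₁ - ξ₂|²`, the bounds `|ξ₁| ≤ √a`, `|ξ₂| ≤ √b`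
reduce the integrand to `c⁻¹ a^(-1/2) b^(-3/2)`, and `c⁻¹ a^(-1/2) ≤ min(a, c)^(-3/2)`.
Hence the integrand is dominated by `(c^(-3/2) + a^(-3/2)) b^(-3/2)`; the Japanese bracket
`(1 + |ξ|²)^(-3/2)` is integrable in dimension `d < 3`, so both terms are integrable on the product,
the first one as a convolution integrand.
-/

open MeasureTheory Module

lemma inv_mul_rpow_neg_half_le {a c : ℝ} (ha : 0 < a) (hc : 0 < c) :
    c⁻¹ * a ^ (-(1 / 2) : ℝ) ≤ c ^ (-(3 / 2) : ℝ) + a ^ (-(3 / 2) : ℝ) := by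
  have neg_three_halves : ∀ t : ℝ, 0 < t → t ^ (-(3 / 2) : ℝ) = t⁻¹ * t ^ (-(1 / 2) : ℝ) :=
    fun t ht => by
      rw [← Real.rpow_neg_one, ← Real.rpow_add ht]
      norm_num
  rcases le_total a c with hac | hca
  · calc c⁻¹ * a ^ (-(1 / 2) : ℝ) ≤ a⁻¹ * a ^ (-(1 / 2) : ℝ) := by gcongr
      _ ≤ c ^ (-(3 / 2) : ℝ) + a ^ (-(3 / 2) : ℝ) := by
        rw [← neg_three_halves a ha]
        exact le_add_of_nonneg_left (by positivity)
  · calc c⁻¹ * a ^ (-(1 / 2) : ℝ) ≤ c⁻¹ * c ^ (-(1 / 2) : ℝ) :=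
          mul_le_mul_of_nonneg_left (Real.rpow_le_rpow_of_nonpos hc hca (by norm_num))
            (by positivity)
      _ ≤ c ^ (-(3 / 2) : ℝ) + a ^ (-(3 / 2) : ℝ) := by
        rw [← neg_three_halves c hc]
        exact le_add_of_nonneg_right (by positivity)

lemma le_rpow_half_one_add_sq (x : ℝ) : x ≤ (1 + x ^ 2) ^ (1 / 2 : ℝ) := by
  rw [← Real.sqrt_eq_rpow]
  exact Real.le_sqrt_of_sq_le (by linarith)

lemma mul_div_one_add_sq_le {x y : ℝ} (z : ℝ) (hy : 0 ≤ y) :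
    x * y / ((1 + z ^ 2) * (1 + x ^ 2) * (1 + y ^ 2) ^ 2) ≤
      ((1 + z ^ 2) ^ (-(3 / 2) : ℝ) + (1 + x ^ 2) ^ (-(3 / 2) : ℝ)) *
        (1 + y ^ 2) ^ (-(3 / 2) : ℝ) := by
  set a := 1 + x ^ 2
  set b := 1 + y ^ 2
  set c := 1 + z ^ 2
  have ha : 0 < a := by positivity
  have hb : 0 < b := by positivity
  have hc : 0 < c := by positivity
  have ha' : a ^ (1 / 2 : ℝ) / a = a ^ (-(1 / 2) : ℝ) := by
    rw [← Real.rpow_sub_one ha.ne']; norm_num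
  have hb' : b ^ (1 / 2 : ℝ) / b ^ 2 = b ^ (-(3 / 2) : ℝ) := by
    rw [← Real.rpow_natCast, ← Real.rpow_sub hb]; norm_num
  calc x * y / (c * a * b ^ 2)
      ≤ a ^ (1 / 2 : ℝ) * b ^ (1 / 2 : ℝ) / (c * a * b ^ 2) := by
        gcongr
        exacts [le_rpow_half_one_add_sq x, le_rpow_half_one_add_sq y]
    _ = c⁻¹ * a ^ (-(1 / 2) : ℝ) * b ^ (-(3 / 2) : ℝ) := by
        rw [← ha', ← hb']; field_simp
    _ ≤ (c ^ (-(3 / 2) : ℝ) + a ^ (-(3 / 2) : ℝ)) * b ^ (-(3 / 2) : ℝ) := by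
        gcongr
        exact inv_mul_rpow_neg_half_le ha hc

section

variable {E : Type*} [NormedAddCommGroup E] [NormedSpace ℝ E] [FiniteDimensional ℝ E]
  [MeasurableSpace E] [BorelSpace E] (μ : Measure E) [μ.IsAddHaarMeasure]

lemma integrable_rpow_neg_three_halves_one_add_norm_sq (hE : finrank ℝ E < 3) :
    Integrable (fun x : E => (1 + ‖x‖ ^ 2) ^ (-(3 / 2) : ℝ)) μ := by
  have h := integrable_rpow_neg_one_add_norm_sq (μ := μ) (r := 3) (by exact_mod_cast hE)
  rwa [neg_div] at h

theorem integrable_norm_mul_norm_div_one_add_norm_sub_sq (hE : finrank ℝ E < 3) :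
    Integrable (fun p : E × E =>
      ‖p.1‖ * ‖p.2‖ / ((1 + ‖p.1 - p.2‖ ^ 2) * (1 + ‖p.1‖ ^ 2) * (1 + ‖p.2‖ ^ 2) ^ 2))
      (μ.prod μ) := by
  have hφ := integrable_rpow_neg_three_halves_one_add_norm_sq μ hE
  have hconv : Integrable (fun p : E × E =>
      (1 + ‖p.2‖ ^ 2) ^ (-(3 / 2) : ℝ) * (1 + ‖p.1 - p.2‖ ^ 2) ^ (-(3 / 2) : ℝ)) (μ.prod μ) :=
    hφ.convolution_integrand (ContinuousLinearMap.mul ℝ ℝ) hφ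
  have hprod := hφ.mul_prod hφ
  refine (hconv.add hprod).mono' (Measurable.aestronglyMeasurable (by fun_prop))
    (Filter.Eventually.of_forall fun p => ?_)
  rw [Real.norm_of_nonneg (by positivity), Pi.add_apply, mul_comm ((1 + ‖p.2‖ ^ 2) ^ _),
    ← add_mul]
  exact mul_div_one_add_sq_le _ (norm_nonneg _)

end

/-- In dimension `d ≤ 2`, the integral
`∫ |ξ₁||ξ₂| / ((1+|ξ₁-ξ₂|²)(1+|ξ₁|²)(1+|ξ₂|²)²) dξ₁ dξ₂` over `ℝ^d × ℝ^d` is finite. -/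
theorem stmt4 (d : ℕ) (hd : d ≤ 2) :
    Integrable (fun p : EuclideanSpace ℝ (Fin d) × EuclideanSpace ℝ (Fin d) =>
      ‖p.1‖ * ‖p.2‖ /
        ((1 + ‖p.1 - p.2‖^2) * (1 + ‖p.1‖^2) * (1 + ‖p.2‖^2)^2)) := by
  rw [Measure.volume_eq_prod]
  exact integrable_norm_mul_norm_div_one_add_norm_sub_sq volume
    (by simpa using hd.trans_lt (by norm_num))
end

section
/- In d = 1, for the free Schrödinger kernel s_τ(x) = (2πiτ)^{-1/2} e^{-x²/(2iτ)} and a standard one-dimensional Brownian motion B, the expectation E[∫₀ᵗ∫₀ˢ s_τ(B_s - B_u) du ds] converges as τ → 0⁺ to 4 t^{3/2}/(3√(2π)), and is uniformly bounded for τ > 1. -/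
open MeasureTheory Real Complex Filter

/-!
For `Re z > 0` both integrals have elementary antiderivatives, and
`∫₀ᵗ∫₀ˢ (z - i(s-u))^{-1/2} du ds = -(4/3)((z - it)^{3/2} - z^{3/2}) - 2it z^{1/2}`.
The right-hand side is continuous on `Re z ≥ 0`, so the limit `τ → 0⁺` is its value
`-(4/3)(-it)^{3/2}` at `z = 0`, and `(2πi)^{-1/2} (-it)^{3/2} = e^{-iπ} t^{3/2}/√(2π)`.
For `τ ≥ 1` the integrand has modulus at most `1`.
-/

theorem integral_cpow_add_mul_ofReal {a b c : ℂ} {x y : ℝ} (hb : b ≠ 0) (hc : c ≠ -1)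
    (h : ∀ u ∈ Set.uIcc x y, a + b * u ∈ slitPlane) :
    ∫ u in x..y, (a + b * u) ^ c =
      ((a + b * y) ^ (c + 1) - (a + b * x) ^ (c + 1)) / (b * (c + 1)) := by
  have hc' : c + 1 ≠ 0 := fun h0 => hc (eq_neg_of_add_eq_zero_left h0)
  have hderiv : ∀ u ∈ Set.uIcc x y,
      HasDerivAt (fun u : ℝ => (a + b * u) ^ (c + 1) / (b * (c + 1))) ((a + b * u) ^ c) u := by
    intro u hu
    have hlin : HasDerivAt (fun u : ℝ => a + b * u) b u := by
      simpa using ((hasDerivAt_id (u : ℂ)).const_mul b).const_add a |>.comp_ofReal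
    refine (((hasStrictDerivAt_cpow_const (h u hu)).hasDerivAt.comp u hlin).div_const
      (b * (c + 1))).congr_deriv ?_
    rw [add_sub_cancel_right]
    field_simp
  have hcont : ContinuousOn (fun u : ℝ => (a + b * u) ^ c) (Set.uIcc x y) := fun u hu =>
    ((continuousAt_cpow_const (h u hu)).comp (f := fun u : ℝ => a + b * u)
      (by fun_prop)).continuousWithinAt
  rw [intervalIntegral.integral_eq_sub_of_hasDerivAt hderiv hcont.intervalIntegrable, sub_div]

theorem integral_cpow_neg_half_sub_I_mul {z : ℂ} (hz : 0 < z.re) (s : ℝ) :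
    ∫ u in (0 : ℝ)..s, (z - I * ((s : ℂ) - (u : ℂ))) ^ (-(1 : ℂ) / 2) =
      2 * I * ((z - I * s) ^ ((1 : ℂ) / 2) - z ^ ((1 : ℂ) / 2)) := by
  have hlin : ∀ u : ℝ, z - I * ((s : ℂ) - (u : ℂ)) = (z - I * s) + I * u := fun u => by ring
  simp_rw [hlin]
  rw [integral_cpow_add_mul_ofReal I_ne_zero (by norm_num)
    fun u _ => mem_slitPlane_iff.2 (Or.inl (by simpa using hz))]
  norm_num
  field_simp
  rw [I_sq]
  ring

noncomputable def doubleIntegralCpowNegHalf (t : ℝ) (z : ℂ) : ℂ :=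
  -(4 / 3) * ((z - I * t) ^ ((3 : ℂ) / 2) - z ^ ((3 : ℂ) / 2)) - 2 * I * z ^ ((1 : ℂ) / 2) * t

theorem integral_integral_cpow_neg_half_sub_I_mul {z : ℂ} (hz : 0 < z.re) (t : ℝ) :
    ∫ s in (0 : ℝ)..t, ∫ u in (0 : ℝ)..s, (z - I * ((s : ℂ) - (u : ℂ))) ^ (-(1 : ℂ) / 2) =
      doubleIntegralCpowNegHalf t z := by
  have hslit : ∀ s : ℝ, z + -I * s ∈ slitPlane := fun s =>
    mem_slitPlane_iff.2 (Or.inl (by simpa using hz))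
  have hint : IntervalIntegrable (fun s : ℝ => (z + -I * s) ^ ((1 : ℂ) / 2)) volume 0 t :=
    (Continuous.cpow (by fun_prop) continuous_const hslit).intervalIntegrable _ _
  simp_rw [integral_cpow_neg_half_sub_I_mul hz, sub_eq_add_neg (z : ℂ) (I * _), ← neg_mul]
  rw [intervalIntegral.integral_const_mul,
    intervalIntegral.integral_sub hint intervalIntegrable_const,
    integral_cpow_add_mul_ofReal (neg_ne_zero.2 I_ne_zero) (by norm_num) fun s _ => hslit s,
    intervalIntegral.integral_const, doubleIntegralCpowNegHalf]
  norm_num [← sub_eq_add_neg]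
  field_simp
  ring

theorem continuousAt_doubleIntegralCpowNegHalf (t : ℝ) {z : ℂ} (hz : 0 ≤ z.re) :
    ContinuousAt (doubleIntegralCpowNegHalf t) z := by
  have hpow : ∀ {w c : ℂ}, 0 ≤ w.re → 0 < c.re → ContinuousAt (fun v : ℂ => v ^ c) w :=
    fun hw hc => continuousAt_cpow_const_of_re_pos (Or.inl hw) hc
  have hshift : ContinuousAt (fun v : ℂ => (v - I * t) ^ ((3 : ℂ) / 2)) z :=
    (hpow (by simpa using hz) (by norm_num)).comp (by fun_prop)
  exact ((continuousAt_const.mul (hshift.sub (hpow hz (by norm_num)))).sub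
    ((continuousAt_const.mul (hpow hz (by norm_num))).mul continuousAt_const))

theorem doubleIntegralCpowNegHalf_zero (t : ℝ) :
    doubleIntegralCpowNegHalf t 0 = -(4 / 3) * (-(I * t)) ^ ((3 : ℂ) / 2) := by
  simp [doubleIntegralCpowNegHalf]

theorem ofReal_mul_cpow {a : ℝ} (ha : 0 < a) {z : ℂ} (hz : z ≠ 0) (r : ℂ) :
    ((a : ℂ) * z) ^ r = (a : ℂ) ^ r * z ^ r := by
  have ha' : (a : ℂ) ≠ 0 := ofReal_ne_zero.2 ha.ne'
  rw [cpow_def_of_ne_zero (mul_ne_zero ha' hz), cpow_def_of_ne_zero ha', cpow_def_of_ne_zero hz,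
    log_ofReal_mul ha hz, ofReal_log ha.le, ← Complex.exp_add, add_mul]

theorem I_cpow_neg_half_mul_neg_I_cpow_three_halves :
    I ^ (-(1 : ℂ) / 2) * (-I) ^ ((3 : ℂ) / 2) = -1 := by
  rw [cpow_def_of_ne_zero I_ne_zero, cpow_def_of_ne_zero (neg_ne_zero.2 I_ne_zero), log_I,
    log_neg_I, ← Complex.exp_add,
    show π / 2 * I * (-1 / 2) + -(π / 2) * I * (3 / 2) = -(π * I) by ring, Complex.exp_neg,
    exp_pi_mul_I]
  norm_num

theorem two_pi_I_cpow_neg_half_mul_cpow_three_halves {t : ℝ} (ht : 0 < t) :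
    (2 * π * I) ^ (-(1 : ℂ) / 2) * (-(I * t)) ^ ((3 : ℂ) / 2) =
      -((t ^ ((3 : ℝ) / 2) / √(2 * π) : ℝ) : ℂ) := by
  rw [show 2 * π * I = ((2 * π : ℝ) : ℂ) * I by push_cast; ring,
    show -(I * t) = (t : ℂ) * -I by ring,
    ofReal_mul_cpow (by positivity) I_ne_zero, ofReal_mul_cpow ht (neg_ne_zero.2 I_ne_zero),
    mul_mul_mul_comm, I_cpow_neg_half_mul_neg_I_cpow_three_halves,
    show -(1 : ℂ) / 2 = ((-(1 / 2) : ℝ) : ℂ) by push_cast; ring,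
    show (3 : ℂ) / 2 = ((3 / 2 : ℝ) : ℂ) by push_cast; ring,
    ← ofReal_cpow (by positivity), ← ofReal_cpow ht.le, Real.rpow_neg (by positivity),
    ← Real.sqrt_eq_rpow]
  push_cast
  ring

theorem norm_integral_integral_le_of_norm_le_const {E : Type*} [NormedAddCommGroup E]
    [NormedSpace ℝ E] {f : ℝ → ℝ → E} {C : ℝ} (h : ∀ s u, ‖f s u‖ ≤ C) (t : ℝ) :
    ‖∫ s in (0 : ℝ)..t, ∫ u in (0 : ℝ)..s, f s u‖ ≤ C * t ^ 2 := by
  have hC : 0 ≤ C := (norm_nonneg _).trans (h 0 0)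
  have hinner : ∀ s ∈ Set.uIoc (0 : ℝ) t, ‖∫ u in (0 : ℝ)..s, f s u‖ ≤ C * |t| := fun s hs =>
    calc ‖∫ u in (0 : ℝ)..s, f s u‖ ≤ C * |s - 0| :=
          intervalIntegral.norm_integral_le_of_norm_le_const fun u _ => h s u
      _ ≤ C * |t - 0| :=
          mul_le_mul_of_nonneg_left (Set.abs_sub_left_of_mem_uIcc (Set.uIoc_subset_uIcc hs)) hC
      _ = C * |t| := by rw [sub_zero]
  calc _ ≤ C * |t| * |t - 0| := intervalIntegral.norm_integral_le_of_norm_le_const hinner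
    _ = C * t ^ 2 := by rw [sub_zero, mul_assoc, ← sq, sq_abs]

theorem norm_cpow_neg_half_le_one {z : ℂ} (hz : 1 ≤ z.re) : ‖z ^ (-(1 : ℂ) / 2)‖ ≤ 1 := by
  rw [show -(1 : ℂ) / 2 = ((-(1 / 2) : ℝ) : ℂ) by push_cast; ring, norm_cpow_real]
  exact Real.rpow_le_one_of_one_le_of_nonpos (hz.trans (re_le_norm z)) (by norm_num)

/-- In `d = 1`, for `𝒳_τ(t) = ∫₀ᵗ∫₀ˢ s_τ(B_s-B_u) du ds` with `s_τ` the free Schrödinger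
kernel, the expectation `E[𝒳_τ(t)] = (2πi)^{-1/2} ∫₀ᵗ∫₀ˢ (τ - i(s-u))^{-1/2} du ds`
converges as `τ → 0⁺` to `4 t^{3/2}/(3√(2π))`, and is uniformly bounded for `τ > 1`. -/
theorem stmt9 (t : ℝ) (ht : 0 < t) (EX : ℝ → ℂ)
    (hEX : ∀ τ : ℝ, 0 < τ → EX τ =
      (2 * Real.pi * Complex.I) ^ (-(1:ℂ)/2) *
        ∫ s in (0:ℝ)..t, ∫ u in (0:ℝ)..s,
          ((τ:ℂ) - Complex.I * ((s:ℂ) - (u:ℂ))) ^ (-(1:ℂ)/2)) :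
    Tendsto EX (nhdsWithin 0 (Set.Ioi 0))
      (nhds ((4 * t ^ ((3:ℝ)/2) / (3 * Real.sqrt (2 * Real.pi)) : ℝ) : ℂ)) ∧
    ∃ C : ℝ, ∀ τ : ℝ, 1 < τ → ‖EX τ‖ ≤ C := by
  set c : ℂ := (2 * π * I) ^ (-(1 : ℂ) / 2)
  constructor
  · have hclosed : ∀ τ : ℝ, 0 < τ → c * doubleIntegralCpowNegHalf t τ = EX τ := fun τ hτ => by
      rw [hEX τ hτ, integral_integral_cpow_neg_half_sub_I_mul (by simpa using hτ)]
    have hlimit : c * doubleIntegralCpowNegHalf t 0 =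
        ((4 * t ^ ((3 : ℝ) / 2) / (3 * √(2 * π)) : ℝ) : ℂ) := by
      rw [doubleIntegralCpowNegHalf_zero, mul_left_comm,
        two_pi_I_cpow_neg_half_mul_cpow_three_halves ht]
      push_cast
      ring
    have hcont : ContinuousAt (fun τ : ℝ => c * doubleIntegralCpowNegHalf t τ) 0 :=
      continuousAt_const.mul ((continuousAt_doubleIntegralCpowNegHalf t (by simp)).comp
        continuous_ofReal.continuousAt)
    rw [← hlimit]
    refine (hcont.tendsto.mono_left nhdsWithin_le_nhds).congr' ?_
    filter_upwards [self_mem_nhdsWithin] with τ hτ using hclosed τ hτ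
  · refine ⟨‖c‖ * t ^ 2, fun τ hτ => ?_⟩
    rw [hEX τ (one_pos.trans hτ), norm_mul, ← one_mul (t ^ 2)]
    gcongr
    exact norm_integral_integral_le_of_norm_le_const
      (fun s u => norm_cpow_neg_half_le_one (by simpa using hτ.le)) t
end
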